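/- (Noether's theorem for variational symmetries, in coordinates.) Let L : J → ℝ be a smooth Lagrangian and let X_α, X^i : ℝ^k × ℝ^n → ℝ (1 ≤ α ≤ k, 1 ≤ i ≤ n) be smooth components of a vector field X = X_α ∂/∂x^α + X^i ∂/∂q^i on E = ℝ^k × ℝ^n satisfying at every point (x,q,v) ∈ J the infinitesimal variational symmetry condition X¹(L) + L · ∑_α (∂X_α/∂x^α + v^j_α ∂X_α/∂q^j) = 0, where X¹(L) = X_α ∂L/∂x^α + X^i ∂L/∂q^i + (D_α X^i − v^i_β D_α X_β) ∂L/∂v^i_α with D_α = ∂/∂x^α + v^j_α ∂/∂q^j acting on functions of (x,q). Then the functions G^α(x,q,v) = (L δ^α_β − ∂L/∂v^i_α · v^i_β) X_β(x,q) + ∂L/∂v^i_α · X^i(x,q), which equal Θ^α_L(X¹), define a conservation law for the Euler–Lagrange equations of L. -/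

import Mathlib

open Function

noncomputable section

/-- The first jet space `J = ℝᵏ × ℝⁿ × (Fin n → Fin k → ℝ)`,
with coordinates `(xᵅ, qⁱ, vⁱ_α)`. -/
abbrev Jet (k n : ℕ) : Type :=
  (Fin k → ℝ) × (Fin n → ℝ) × (Fin n → Fin k → ℝ)

variable {k n : ℕ}

/-- Partial derivative `∂F/∂xᵅ` of a function on the jet space. -/
noncomputable def pdX (F : Jet k n → ℝ) (α : Fin k) (z : Jet k n) : ℝ :=
  deriv (fun t => F (Function.update z.1 α t, z.2.1, z.2.2)) (z.1 α)

/-- Partial derivative `∂F/∂qⁱ` of a function on the jet space. -/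
noncomputable def pdQ (F : Jet k n → ℝ) (i : Fin n) (z : Jet k n) : ℝ :=
  deriv (fun t => F (z.1, Function.update z.2.1 i t, z.2.2)) (z.2.1 i)

/-- Partial derivative `∂F/∂vⁱ_α` of a function on the jet space. -/
noncomputable def pdV (F : Jet k n → ℝ) (i : Fin n) (α : Fin k) (z : Jet k n) : ℝ :=
  deriv (fun t => F (z.1, z.2.1,
    Function.update z.2.2 i (Function.update (z.2.2 i) α t))) (z.2.2 i α)

/-- Partial derivative `∂φⁱ/∂xᵅ` of a map `φ : ℝᵏ → ℝⁿ`. -/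
noncomputable def pD (φ : (Fin k → ℝ) → (Fin n → ℝ)) (i : Fin n) (α : Fin k)
    (x : Fin k → ℝ) : ℝ :=
  deriv (fun t => φ (Function.update x α t) i) (x α)

/-- Second partial derivative `∂²φⁱ/∂xᵅ∂xᵝ` of a map `φ : ℝᵏ → ℝⁿ`. -/
noncomputable def pD2 (φ : (Fin k → ℝ) → (Fin n → ℝ)) (i : Fin n) (α β : Fin k)
    (x : Fin k → ℝ) : ℝ :=
  deriv (fun t => pD φ i β (Function.update x α t)) (x α)

/-- First prolongation `j¹φ : ℝᵏ → J` of `φ : ℝᵏ → ℝⁿ`. -/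
noncomputable def j1 (φ : (Fin k → ℝ) → (Fin n → ℝ)) (x : Fin k → ℝ) : Jet k n :=
  (x, φ x, fun i α => pD φ i α x)

/-- `φ` is a smooth solution of the Euler–Lagrange equations of the Lagrangian `L`:
`∑_α ∂/∂xᵅ[(∂L/∂vⁱ_α) ∘ j¹φ] = (∂L/∂qⁱ) ∘ j¹φ` for all `i`. -/
def IsELSolution (L : Jet k n → ℝ) (φ : (Fin k → ℝ) → (Fin n → ℝ)) : Prop :=
  ContDiff ℝ (⊤ : ℕ∞) φ ∧
  ∀ (i : Fin n) (x : Fin k → ℝ),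
    (∑ α : Fin k, deriv (fun t => pdV L i α (j1 φ (Function.update x α t))) (x α))
      = pdQ L i (j1 φ x)

/-- `G = (G¹, …, Gᵏ)` is a conservation law for the Euler–Lagrange equations of `L`:
`∑_α ∂/∂xᵅ(Gᵅ ∘ j¹φ) = 0` for every solution `φ`. -/
def IsConservationLaw (L : Jet k n → ℝ) (G : Fin k → Jet k n → ℝ) : Prop :=
  ∀ φ : (Fin k → ℝ) → (Fin n → ℝ), IsELSolution L φ →
    ∀ x : Fin k → ℝ,
      (∑ α : Fin k, deriv (fun t => G α (j1 φ (Function.update x α t))) (x α)) = 0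

/-- Partial derivative `∂f/∂xᵅ` of a function on `E = ℝᵏ × ℝⁿ`. -/
noncomputable def pdEX (f : (Fin k → ℝ) → (Fin n → ℝ) → ℝ) (α : Fin k)
    (x : Fin k → ℝ) (q : Fin n → ℝ) : ℝ :=
  deriv (fun t => f (Function.update x α t) q) (x α)

/-- Partial derivative `∂f/∂qⁱ` of a function on `E = ℝᵏ × ℝⁿ`. -/
noncomputable def pdEQ (f : (Fin k → ℝ) → (Fin n → ℝ) → ℝ) (i : Fin n)
    (x : Fin k → ℝ) (q : Fin n → ℝ) : ℝ :=
  deriv (fun t => f x (Function.update q i t)) (q i)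

/-- Total derivative `D_α = ∂/∂xᵅ + vʲ_α ∂/∂qʲ` acting on a function of `(x, q)`,
evaluated at a jet point `z = (x, q, v)`. -/
noncomputable def totalD (f : (Fin k → ℝ) → (Fin n → ℝ) → ℝ) (α : Fin k)
    (z : Jet k n) : ℝ :=
  pdEX f α z.1 z.2.1 + ∑ j : Fin n, z.2.2 j α * pdEQ f j z.1 z.2.1

/-! Write the current as `Gᵅ = L X_α + (∂L/∂vⁱ_α) Qⁱ` with the characteristic
`Qⁱ = Xⁱ − vⁱ_β X_β`. Differentiating along `j¹φ` and summing over `α` gives Noether's identity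
`∑_α D_α Gᵅ = X¹(L) + L D_α X_α + Qⁱ (∑_α D_α(∂L/∂vⁱ_α) − ∂L/∂qⁱ)`: the terms
`vⁱ_α X_α ∂L/∂qⁱ` of `X_α D_α L` cancel against `−Qⁱ ∂L/∂qⁱ`, and the terms with second
derivatives of `φ` cancel by the symmetry of `∂²φⁱ/∂xᵅ∂xᵝ`. The first summand on the right vanishes
by the symmetry condition and the second on solutions of the Euler–Lagrange equations. -/

open Finset

section PartialDerivatives

lemma hasDerivAt_update_update {ι κ : Type*} [Fintype ι] [DecidableEq ι] [Fintype κ]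
    [DecidableEq κ] (v : ι → κ → ℝ) (i : ι) (α : κ) (t : ℝ) :
    HasDerivAt (fun s => update v i (update (v i) α s)) (Pi.single i (Pi.single α 1)) t := by
  refine hasDerivAt_pi.2 fun j => ?_
  rcases eq_or_ne j i with rfl | hj
  · simpa using hasDerivAt_update (v j) α t
  · simpa [hj] using hasDerivAt_const t (v j)

lemma deriv_comp_eq_fderiv_of_eq {E : Type*} [NormedAddCommGroup E] [NormedSpace ℝ E]
    {F : E → ℝ} {γ : ℝ → E} {γ' z : E} {t : ℝ}
    (hF : DifferentiableAt ℝ F z) (hγ : HasDerivAt γ γ' t) (hz : γ t = z) :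
    deriv (fun s => F (γ s)) t = fderiv ℝ F z γ' :=
  (hF.hasFDerivAt.comp_hasDerivAt_of_eq t hγ hz.symm).deriv

lemma pdX_eq_fderiv {F : Jet k n → ℝ} {z : Jet k n} (hF : DifferentiableAt ℝ F z) (α : Fin k) :
    pdX F α z = fderiv ℝ F z (Pi.single α 1, 0, 0) :=
  deriv_comp_eq_fderiv_of_eq hF ((hasDerivAt_update z.1 α _).prodMk
    ((hasDerivAt_const _ z.2.1).prodMk (hasDerivAt_const _ z.2.2))) (by simp)

lemma pdQ_eq_fderiv {F : Jet k n → ℝ} {z : Jet k n} (hF : DifferentiableAt ℝ F z) (i : Fin n) :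
    pdQ F i z = fderiv ℝ F z (0, Pi.single i 1, 0) :=
  deriv_comp_eq_fderiv_of_eq hF ((hasDerivAt_const _ z.1).prodMk
    ((hasDerivAt_update z.2.1 i _).prodMk (hasDerivAt_const _ z.2.2))) (by simp)

lemma pdV_eq_fderiv {F : Jet k n → ℝ} {z : Jet k n} (hF : DifferentiableAt ℝ F z)
    (i : Fin n) (α : Fin k) :
    pdV F i α z = fderiv ℝ F z (0, 0, Pi.single i (Pi.single α 1)) :=
  deriv_comp_eq_fderiv_of_eq hF ((hasDerivAt_const _ z.1).prodMk
    ((hasDerivAt_const _ z.2.1).prodMk (hasDerivAt_update_update z.2.2 i α _))) (by simp)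

lemma clm_apply_jet_eq_sum (T : Jet k n →L[ℝ] ℝ) (a : Fin k → ℝ) (b : Fin n → ℝ)
    (c : Fin n → Fin k → ℝ) :
    T (a, b, c) = ∑ α, a α * T (Pi.single α 1, 0, 0) + ∑ i, b i * T (0, Pi.single i 1, 0)
      + ∑ i, ∑ β, c i β * T (0, 0, Pi.single i (Pi.single β 1)) := by
  have hdecomp : ((a, b, c) : Jet k n) = ∑ α, a α • ((Pi.single α 1, 0, 0) : Jet k n)
      + ∑ i, b i • ((0, Pi.single i 1, 0) : Jet k n)
      + ∑ i, ∑ β, c i β • ((0, 0, Pi.single i (Pi.single β 1)) : Jet k n) := by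
    ext <;> simp [Prod.fst_sum, Prod.snd_sum, Finset.sum_apply, Pi.single_apply]
  conv_lhs => rw [hdecomp]
  simp only [map_add, map_sum, map_smul, smul_eq_mul]

lemma differentiable_pdV {L : Jet k n → ℝ} (hL : ContDiff ℝ 2 L) (i : Fin n) (α : Fin k) :
    Differentiable ℝ (pdV L i α) := by
  have : pdV L i α = fun z => fderiv ℝ L z (0, 0, Pi.single i (Pi.single α 1)) := by
    funext z
    exact pdV_eq_fderiv (hL.differentiable (by norm_num) z) i α
  rw [this]
  exact ((hL.fderiv_right (m := 1) (by norm_num)).clm_apply contDiff_const).differentiable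
    (by norm_num)

end PartialDerivatives

section Prolongation

variable {φ : (Fin k → ℝ) → (Fin n → ℝ)}

lemma pD_eq_fderiv (hφ : Differentiable ℝ φ) (i : Fin n) (α : Fin k) :
    pD φ i α = fun x => fderiv ℝ (fun y => φ y i) x (Pi.single α 1) :=
  funext fun x => deriv_comp_eq_fderiv_of_eq (differentiable_pi.1 hφ i x)
    (hasDerivAt_update x α _) (update_eq_self α x)

lemma differentiable_pD (hφ : ContDiff ℝ 2 φ) (i : Fin n) (α : Fin k) :
    Differentiable ℝ (pD φ i α) := by
  rw [pD_eq_fderiv (hφ.differentiable (by norm_num))]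
  exact (((contDiff_pi.1 hφ i).fderiv_right (m := 1) (by norm_num)).clm_apply
    contDiff_const).differentiable (by norm_num)

lemma pD2_eq_fderiv_fderiv (hφ : ContDiff ℝ 2 φ) (i : Fin n) (α β : Fin k)
    (x : Fin k → ℝ) :
    pD2 φ i α β x = fderiv ℝ (fderiv ℝ (fun y => φ y i)) x (Pi.single α 1) (Pi.single β 1) := by
  have hφi := contDiff_pi.1 hφ i
  rw [pD2, deriv_comp_eq_fderiv_of_eq (differentiable_pD hφ i β x) (hasDerivAt_update x α _)
    (update_eq_self α x), pD_eq_fderiv (hφ.differentiable (by norm_num)),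
    fderiv_clm_apply _ (differentiableAt_const _)]
  · simp
  · exact (hφi.fderiv_right (m := 1) (by norm_num)).differentiable (by norm_num) x

lemma pD2_comm (hφ : ContDiff ℝ 2 φ) (i : Fin n) (α β : Fin k) (x : Fin k → ℝ) :
    pD2 φ i α β x = pD2 φ i β α x := by
  rw [pD2_eq_fderiv_fderiv hφ, pD2_eq_fderiv_fderiv hφ]
  exact ((contDiff_pi.1 hφ i).contDiffAt.isSymmSndFDerivAt (by simp)) _ _

lemma hasDerivAt_pD_update (hφ : ContDiff ℝ 2 φ) (x : Fin k → ℝ) (α : Fin k) (i : Fin n)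
    (β : Fin k) : HasDerivAt (fun t => pD φ i β (update x α t)) (pD2 φ i α β x) (x α) :=
  ((differentiable_pD hφ i β _).comp _ (hasDerivAt_update x α _).differentiableAt).hasDerivAt

lemma hasDerivAt_j1_update (hφ : ContDiff ℝ 2 φ) (x : Fin k → ℝ) (α : Fin k) :
    HasDerivAt (fun t => j1 φ (update x α t))
      ((Pi.single α 1, fun i => pD φ i α x, fun i β => pD2 φ i α β x) : Jet k n) (x α) := by
  have hcurve := (hasDerivAt_update x α (x α)).differentiableAt
  refine (hasDerivAt_update x α _).prodMk
    ((hasDerivAt_pi.2 fun i => ?_).prodMk (hasDerivAt_pi.2 fun i => hasDerivAt_pi.2 fun β => ?_))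
  · exact (((contDiff_pi.1 hφ i).differentiable (by norm_num) _).comp _ hcurve).hasDerivAt
  · exact hasDerivAt_pD_update hφ x α i β

lemma hasDerivAt_comp_j1_update {F : Jet k n → ℝ} (hF : Differentiable ℝ F)
    (hφ : ContDiff ℝ 2 φ) (x : Fin k → ℝ) (α : Fin k) :
    HasDerivAt (fun t => F (j1 φ (update x α t)))
      (pdX F α (j1 φ x) + ∑ i, pD φ i α x * pdQ F i (j1 φ x)
        + ∑ i, ∑ β, pD2 φ i α β x * pdV F i β (j1 φ x)) (x α) := by
  refine ((hF _).hasFDerivAt.comp_hasDerivAt_of_eq (x α) (hasDerivAt_j1_update hφ x α)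
    (by rw [update_eq_self])).congr_deriv ?_
  rw [clm_apply_jet_eq_sum]
  simp [Pi.single_apply, ← pdX_eq_fderiv (hF _), ← pdQ_eq_fderiv (hF _),
    ← pdV_eq_fderiv (hF _)]

lemma hasDerivAt_totalD {f : (Fin k → ℝ) → (Fin n → ℝ) → ℝ}
    (hf : Differentiable ℝ (fun p : (Fin k → ℝ) × (Fin n → ℝ) => f p.1 p.2))
    (hφ : ContDiff ℝ 2 φ) (x : Fin k → ℝ) (α : Fin k) :
    HasDerivAt (fun t => f (update x α t) (φ (update x α t))) (totalD f α (j1 φ x)) (x α) := by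
  -- as a function on `J` not depending on `v`, `f` has `pdX = pdEX` and `pdQ = pdEQ` by definition
  have h := hasDerivAt_comp_j1_update (F := fun z => f z.1 z.2.1)
    (hf.comp (differentiable_fst.prodMk differentiable_snd.fst)) hφ x α
  simp only [pdV, deriv_const, mul_zero, sum_const_zero, add_zero] at h
  exact h

end Prolongation

/- Noether's identity at a point: `ℓ, Lx, Lq, Lv` are `L` and its partial derivatives, `X, Y` the
components `X_α, Xⁱ`, `DX β α = D_α X_β`, `DY i α = D_α Xⁱ`, `u, S` the first and second derivatives
of `φ`, and `E i α` the derivative of `∂L/∂vⁱ_α` along `j¹φ` in the direction `xᵅ`. -/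
theorem noether_identity_algebraic (ℓ : ℝ) (Lx X : Fin k → ℝ) (Lq Y : Fin n → ℝ)
    (Lv E DY u : Fin n → Fin k → ℝ) (DX : Fin k → Fin k → ℝ) (S : Fin n → Fin k → Fin k → ℝ)
    (hS : ∀ i α β, S i α β = S i β α) :
    ∑ α, ((Lx α + ∑ i, u i α * Lq i + ∑ i, ∑ β, S i α β * Lv i β) * X α + ℓ * DX α α
      + ∑ i, (E i α * (Y i - ∑ β, u i β * X β)
        + Lv i α * (DY i α - ∑ β, (S i α β * X β + u i β * DX β α))))
    = (∑ α, X α * Lx α + ∑ i, Y i * Lq i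
        + ∑ i, ∑ α, (DY i α - ∑ β, u i β * DX β α) * Lv i α) + ℓ * ∑ α, DX α α
      + ∑ i, (∑ α, E i α - Lq i) * (Y i - ∑ β, u i β * X β) := by
  have hLq : ∑ α, (∑ i, u i α * Lq i) * X α = ∑ i, Lq i * ∑ β, u i β * X β := by
    simp only [sum_mul, mul_sum]
    rw [sum_comm]
    exact sum_congr rfl fun _ _ => sum_congr rfl fun _ _ => by ring
  have hLv : ∑ α, (∑ i, ∑ β, S i α β * Lv i β) * X α
      = ∑ i, ∑ α, Lv i α * ∑ β, S i α β * X β := by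
    simp only [sum_mul, mul_sum]
    rw [sum_comm]
    refine sum_congr rfl fun i _ => ?_
    rw [sum_comm]
    exact sum_congr rfl fun _ _ => sum_congr rfl fun _ _ => by rw [hS]; ring
  rw [sum_add_distrib, sum_add_distrib, sum_comm (f := fun α i => _)]
  simp only [add_mul, sum_add_distrib, hLq, hLv]
  simp only [sub_mul _ (Lq _), sum_mul]
  simp only [mul_add, mul_sub, sub_mul, sum_add_distrib, sum_sub_distrib, mul_sum, sum_mul]
  simp only [mul_comm, mul_left_comm]
  ring

section NoetherCurrent

variable (L : Jet k n → ℝ) (Xb : Fin k → (Fin k → ℝ) → (Fin n → ℝ) → ℝ)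
  (Xv : Fin n → (Fin k → ℝ) → (Fin n → ℝ) → ℝ)

def characteristic (i : Fin n) (z : Jet k n) : ℝ :=
  Xv i z.1 z.2.1 - ∑ β, z.2.2 i β * Xb β z.1 z.2.1

def noetherCurrent (α : Fin k) (z : Jet k n) : ℝ :=
  (∑ β : Fin k,
    (L z * (if α = β then (1 : ℝ) else 0)
      - ∑ i : Fin n, pdV L i α z * z.2.2 i β) * Xb β z.1 z.2.1)
  + ∑ i : Fin n, pdV L i α z * Xv i z.1 z.2.1

def variationalSymmetryDefect (z : Jet k n) : ℝ :=
  ((∑ α : Fin k, Xb α z.1 z.2.1 * pdX L α z)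
    + (∑ i : Fin n, Xv i z.1 z.2.1 * pdQ L i z)
    + ∑ i : Fin n, ∑ α : Fin k,
        (totalD (Xv i) α z
          - ∑ β : Fin k, z.2.2 i β * totalD (Xb β) α z) * pdV L i α z)
  + L z * (∑ α : Fin k, totalD (Xb α) α z)

lemma noetherCurrent_eq (α : Fin k) (z : Jet k n) :
    noetherCurrent L Xb Xv α z
      = L z * Xb α z.1 z.2.1 + ∑ i, pdV L i α z * characteristic Xb Xv i z := by
  simp only [noetherCurrent, characteristic, sub_mul, sum_sub_distrib, mul_ite, mul_one,
    mul_zero, ite_mul, zero_mul, sum_ite_eq, mem_univ, if_true, mul_sub, mul_sum, sum_mul]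
  rw [sum_comm]
  simp only [mul_assoc]
  ring

end NoetherCurrent

section NoetherIdentity

variable {L : Jet k n → ℝ} {Xb : Fin k → (Fin k → ℝ) → (Fin n → ℝ) → ℝ}
  {Xv : Fin n → (Fin k → ℝ) → (Fin n → ℝ) → ℝ} {φ : (Fin k → ℝ) → (Fin n → ℝ)}

lemma hasDerivAt_characteristic
    (hXb : ∀ β, Differentiable ℝ (fun p : (Fin k → ℝ) × (Fin n → ℝ) => Xb β p.1 p.2))
    (hXv : ∀ i, Differentiable ℝ (fun p : (Fin k → ℝ) × (Fin n → ℝ) => Xv i p.1 p.2))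
    (hφ : ContDiff ℝ 2 φ) (x : Fin k → ℝ) (α : Fin k) (i : Fin n) :
    HasDerivAt (fun t => characteristic Xb Xv i (j1 φ (update x α t)))
      (totalD (Xv i) α (j1 φ x)
        - ∑ β, (pD2 φ i α β x * Xb β x (φ x) + pD φ i β x * totalD (Xb β) α (j1 φ x)))
      (x α) := by
  have h := (hasDerivAt_totalD (hXv i) hφ x α).sub (HasDerivAt.fun_sum (u := univ) fun β _ =>
    (hasDerivAt_pD_update hφ x α i β).mul (hasDerivAt_totalD (hXb β) hφ x α))
  rw [update_eq_self] at h
  exact h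

lemma hasDerivAt_noetherCurrent (hL : ContDiff ℝ 2 L)
    (hXb : ∀ β, Differentiable ℝ (fun p : (Fin k → ℝ) × (Fin n → ℝ) => Xb β p.1 p.2))
    (hXv : ∀ i, Differentiable ℝ (fun p : (Fin k → ℝ) × (Fin n → ℝ) => Xv i p.1 p.2))
    (hφ : ContDiff ℝ 2 φ) (x : Fin k → ℝ) (α : Fin k) :
    HasDerivAt (fun t => noetherCurrent L Xb Xv α (j1 φ (update x α t)))
      ((pdX L α (j1 φ x) + ∑ i, pD φ i α x * pdQ L i (j1 φ x)
          + ∑ i, ∑ β, pD2 φ i α β x * pdV L i β (j1 φ x)) * Xb α x (φ x)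
        + L (j1 φ x) * totalD (Xb α) α (j1 φ x)
        + ∑ i, (deriv (fun t => pdV L i α (j1 φ (update x α t))) (x α)
              * characteristic Xb Xv i (j1 φ x)
            + pdV L i α (j1 φ x) * (totalD (Xv i) α (j1 φ x)
              - ∑ β, (pD2 φ i α β x * Xb β x (φ x) + pD φ i β x * totalD (Xb β) α (j1 φ x)))))
      (x α) := by
  have hLv : ∀ i, HasDerivAt (fun t => pdV L i α (j1 φ (update x α t)))
      (deriv (fun t => pdV L i α (j1 φ (update x α t))) (x α)) (x α) := fun i =>
    (hasDerivAt_comp_j1_update (differentiable_pdV hL i α) hφ x α).differentiableAt.hasDerivAt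
  have h := ((hasDerivAt_comp_j1_update (hL.differentiable (by norm_num)) hφ x α).mul
    (hasDerivAt_totalD (hXb α) hφ x α)).add
    (HasDerivAt.fun_sum (u := univ) fun i _ => (hLv i).mul
      (hasDerivAt_characteristic hXb hXv hφ x α i))
  rw [update_eq_self] at h
  simp only [noetherCurrent_eq]
  exact h

theorem sum_deriv_noetherCurrent (hL : ContDiff ℝ 2 L)
    (hXb : ∀ β, Differentiable ℝ (fun p : (Fin k → ℝ) × (Fin n → ℝ) => Xb β p.1 p.2))
    (hXv : ∀ i, Differentiable ℝ (fun p : (Fin k → ℝ) × (Fin n → ℝ) => Xv i p.1 p.2))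
    (hφ : ContDiff ℝ 2 φ) (x : Fin k → ℝ) :
    ∑ α, deriv (fun t => noetherCurrent L Xb Xv α (j1 φ (update x α t))) (x α)
      = variationalSymmetryDefect L Xb Xv (j1 φ x)
        + ∑ i, (∑ α, deriv (fun t => pdV L i α (j1 φ (update x α t))) (x α)
            - pdQ L i (j1 φ x)) * characteristic Xb Xv i (j1 φ x) := by
  rw [sum_congr rfl fun α _ => (hasDerivAt_noetherCurrent hL hXb hXv hφ x α).deriv]
  exact noether_identity_algebraic (L (j1 φ x)) (fun α => pdX L α (j1 φ x))
    (fun α => Xb α x (φ x)) (fun i => pdQ L i (j1 φ x)) (fun i => Xv i x (φ x)) (fun i α => pdV L i α (j1 φ x))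
    (fun i α => deriv (fun t => pdV L i α (j1 φ (update x α t))) (x α))
    (fun i α => totalD (Xv i) α (j1 φ x)) (fun i α => pD φ i α x)
    (fun β α => totalD (Xb β) α (j1 φ x)) (fun i α β => pD2 φ i α β x)
    fun i α β => pD2_comm hφ i α β x

theorem isConservationLaw_noetherCurrent (hL : ContDiff ℝ 2 L)
    (hXb : ∀ β, Differentiable ℝ (fun p : (Fin k → ℝ) × (Fin n → ℝ) => Xb β p.1 p.2))
    (hXv : ∀ i, Differentiable ℝ (fun p : (Fin k → ℝ) × (Fin n → ℝ) => Xv i p.1 p.2))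
    (hsym : ∀ z, variationalSymmetryDefect L Xb Xv z = 0) :
    IsConservationLaw L (noetherCurrent L Xb Xv) := by
  rintro φ ⟨hφ, hEL⟩ x
  rw [sum_deriv_noetherCurrent hL hXb hXv (hφ.of_le (WithTop.coe_le_coe.2 le_top)) x, hsym]
  simp [hEL]

end NoetherIdentity

theorem statement10_general (k n : ℕ)
    (L : Jet k n → ℝ) (hL : ContDiff ℝ (⊤ : ℕ∞) L)
    (Xb : Fin k → (Fin k → ℝ) → (Fin n → ℝ) → ℝ)
    (hXb : ∀ α, ContDiff ℝ (⊤ : ℕ∞)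
      (fun p : (Fin k → ℝ) × (Fin n → ℝ) => Xb α p.1 p.2))
    (Xv : Fin n → (Fin k → ℝ) → (Fin n → ℝ) → ℝ)
    (hXv : ∀ i, ContDiff ℝ (⊤ : ℕ∞)
      (fun p : (Fin k → ℝ) × (Fin n → ℝ) => Xv i p.1 p.2))
    (hvarsym : ∀ z : Jet k n,
      ((∑ α : Fin k, Xb α z.1 z.2.1 * pdX L α z)
        + (∑ i : Fin n, Xv i z.1 z.2.1 * pdQ L i z)
        + ∑ i : Fin n, ∑ α : Fin k,
            (totalD (Xv i) α z
              - ∑ β : Fin k, z.2.2 i β * totalD (Xb β) α z) * pdV L i α z)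
      + L z * (∑ α : Fin k, totalD (Xb α) α z) = 0) :
    IsConservationLaw L
      (fun α z =>
        (∑ β : Fin k,
          (L z * (if α = β then (1 : ℝ) else 0)
            - ∑ i : Fin n, pdV L i α z * z.2.2 i β) * Xb β z.1 z.2.1)
        + ∑ i : Fin n, pdV L i α z * Xv i z.1 z.2.1) :=
  isConservationLaw_noetherCurrent (hL.of_le (WithTop.coe_le_coe.2 le_top))
    (fun β => (hXb β).differentiable (by simp)) (fun i => (hXv i).differentiable (by simp))
    hvarsym

/-- Noether's theorem for variational symmetries: if the vector field
`X = X_α ∂/∂xᵅ + Xⁱ ∂/∂qⁱ` on `E` satisfies `X¹(L) + L·d_{T⁽⁰⁾_α}X_α = 0`, then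
`Gᵅ = Θᵅ_L(X¹)` defines a conservation law. -/
theorem statement10 (k n : ℕ) (hk : 1 ≤ k) (hn : 1 ≤ n)
    (L : Jet k n → ℝ) (hL : ContDiff ℝ (⊤ : ℕ∞) L)
    (Xb : Fin k → (Fin k → ℝ) → (Fin n → ℝ) → ℝ)
    (hXb : ∀ α, ContDiff ℝ (⊤ : ℕ∞)
      (fun p : (Fin k → ℝ) × (Fin n → ℝ) => Xb α p.1 p.2))
    (Xv : Fin n → (Fin k → ℝ) → (Fin n → ℝ) → ℝ)
    (hXv : ∀ i, ContDiff ℝ (⊤ : ℕ∞)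
      (fun p : (Fin k → ℝ) × (Fin n → ℝ) => Xv i p.1 p.2))
    (hvarsym : ∀ z : Jet k n,
      ((∑ α : Fin k, Xb α z.1 z.2.1 * pdX L α z)
        + (∑ i : Fin n, Xv i z.1 z.2.1 * pdQ L i z)
        + ∑ i : Fin n, ∑ α : Fin k,
            (totalD (Xv i) α z
              - ∑ β : Fin k, z.2.2 i β * totalD (Xb β) α z) * pdV L i α z)
      + L z * (∑ α : Fin k, totalD (Xb α) α z) = 0) :
    IsConservationLaw L
      (fun α z =>
        (∑ β : Fin k,
          (L z * (if α = β then (1 : ℝ) else 0)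
            - ∑ i : Fin n, pdV L i α z * z.2.2 i β) * Xb β z.1 z.2.1)
        + ∑ i : Fin n, pdV L i α z * Xv i z.1 z.2.1) :=
  statement10_general k n L hL Xb hXb Xv hXv hvarsym
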